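/- Let G be a finite simple graph on vertex set V with n = |V|, let c : V → ℝ with c_v ≠ 0 for every v, suppose ∑_{v∈S} c_v ≤ 1 for every stable set S of G, and suppose there exist n maximal stable sets of G whose incidence vectors are linearly independent and each of which satisfies ∑_{v∈S} c_v = 1 (i.e., c^T x ≤ 1 is a full facet of STAB(G)). Let v ∈ V be a vertex of degree 2 whose two neighbors a and b are nonadjacent. Then c_v ≤ c_a and c_v ≤ c_b. -/

import Mathlib

def IsStable {V : Type*} (G : SimpleGraph V) (S : Finset V) : Prop :=
  ∀ u ∈ S, ∀ w ∈ S, ¬ G.Adj u w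

def MaxStable {V : Type*} (G : SimpleGraph V) (S : Finset V) : Prop :=
  IsStable G S ∧ ∀ T : Finset V, IsStable G T → S ⊆ T → S = T

noncomputable def incVec {V : Type*} (S : Finset V) : V → ℝ :=
  Set.indicator (↑S) 1

def FacetInducing {V : Type*} (G : SimpleGraph V) : Prop :=
  ∃ c : V → ℝ,
    (∀ v, c v ≠ 0) ∧
    (∀ S : Finset V, IsStable G S → ∑ v ∈ S, c v ≤ 1) ∧
    ∃ S : Fin (Nat.card V) → Finset V,
      (∀ j, MaxStable G (S j)) ∧
      LinearIndependent ℝ (fun j => incVec (S j)) ∧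
      ∀ j, ∑ v ∈ S j, c v = 1


/-!
Some tight stable set `S` contains `a` but not `b`. Otherwise, by maximality and `N(v) = {a, b}`,
every tight `S` meets `{v, b}` in exactly one vertex, so `c` and `χ_v + χ_b` agree on a basis of
`ℝ^V`, forcing `c_a = 0`. Exchanging `a` for `v` in such an `S` gives a stable set of weight
`1 - c_a + c_v`, which is at most `1`.
-/

open Matrix

theorem Matrix.eq_of_dotProduct_eq_of_linearIndependent {K ι n : Type*} [Field K] [Fintype ι]
    [Fintype n] {w : ι → n → K} (hw : LinearIndependent K w)
    (hcard : Fintype.card ι = Fintype.card n) {c d : n → K}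
    (h : ∀ j, c ⬝ᵥ w j = d ⬝ᵥ w j) : c = d := by
  classical
  have hspan := hw.span_eq_top_of_card_eq_finrank' (by simpa using hcard)
  exact (dotProductEquiv K n).injective (LinearMap.ext_on_range hspan h)

theorem dotProduct_incVec {V : Type*} [Fintype V] (c : V → ℝ) (S : Finset V) :
    c ⬝ᵥ incVec S = ∑ u ∈ S, c u := by
  classical
  simp [dotProduct, incVec, Set.indicator_apply, Finset.sum_ite_mem]

section Stable

variable {V : Type*} {G : SimpleGraph V} {S T : Finset V} {v x y : V}

theorem IsStable.subset (hS : IsStable G S) (hTS : T ⊆ S) : IsStable G T :=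
  fun u hu w hw => hS u (hTS hu) w (hTS hw)

theorem IsStable.insert_of_forall_not_adj [DecidableEq V] (hS : IsStable G S)
    (hv : ∀ u ∈ S, ¬ G.Adj v u) : IsStable G (insert v S) := by
  intro p hp q hq
  rw [Finset.mem_insert] at hp hq
  rcases hp with rfl | hp <;> rcases hq with rfl | hq
  · exact G.irrefl
  · exact hv q hq
  · exact fun h => hv p hp h.symm
  · exact hS p hp q hq

theorem MaxStable.exists_adj_of_notMem [DecidableEq V] (hS : MaxStable G S) (hv : v ∉ S) :
    ∃ u ∈ S, G.Adj v u := by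
  by_contra! h
  have hSv := hS.2 _ (hS.1.insert_of_forall_not_adj h) (Finset.subset_insert v S)
  exact hv (hSv ▸ Finset.mem_insert_self v S)

theorem adj_iff_of_neighborSet_eq_pair (hnb : G.neighborSet v = {x, y}) (w : V) :
    G.Adj v w ↔ w = x ∨ w = y := by
  rw [← SimpleGraph.mem_neighborSet, hnb]
  rfl

theorem MaxStable.mem_iff_notMem_of_neighborSet_eq_pair (hS : MaxStable G S)
    (hnb : G.neighborSet v = {x, y}) (hxy : x ∈ S → y ∈ S) : v ∈ S ↔ y ∉ S := by
  classical
  have hadj := adj_iff_of_neighborSet_eq_pair hnb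
  refine ⟨fun hv hy => hS.1 v hv y hy ((hadj y).2 (Or.inr rfl)), fun hy => ?_⟩
  by_contra hv
  obtain ⟨u, hu, hvu⟩ := hS.exists_adj_of_notMem hv
  rcases (hadj u).1 hvu with rfl | rfl
  exacts [hy (hxy hu), hy hu]

theorem IsStable.insert_erase_of_neighborSet_eq_pair [DecidableEq V] (hS : IsStable G S)
    (hnb : G.neighborSet v = {x, y}) (hy : y ∉ S) : IsStable G (insert v (S.erase x)) := by
  refine (hS.subset (Finset.erase_subset x S)).insert_of_forall_not_adj fun u hu hvu => ?_
  rcases (adj_iff_of_neighborSet_eq_pair hnb u).1 hvu with rfl | rfl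
  exacts [Finset.notMem_erase u S hu, hy (Finset.mem_of_mem_erase hu)]

end Stable

section Facet

variable {V ι : Type*} [Fintype V] [Fintype ι] {G : SimpleGraph V} {c : V → ℝ}
  {S : ι → Finset V} {v x y : V}

theorem exists_mem_notMem_of_neighborSet_eq_pair (hcard : Fintype.card ι = Fintype.card V)
    (hmax : ∀ j, MaxStable G (S j)) (hind : LinearIndependent ℝ (fun j => incVec (S j)))
    (hone : ∀ j, ∑ u ∈ S j, c u = 1) (hcx : c x ≠ 0) (hxy : x ≠ y)
    (hnb : G.neighborSet v = {x, y}) : ∃ j, x ∈ S j ∧ y ∉ S j := by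
  classical
  by_contra! h
  have hpair : ∀ j, incVec (S j) v + incVec (S j) y = 1 := fun j => by
    by_cases hy : y ∈ S j <;>
      simp [incVec, hy, (hmax j).mem_iff_notMem_of_neighborSet_eq_pair hnb (h j)]
  have hc : c = Pi.single v 1 + Pi.single y 1 :=
    eq_of_dotProduct_eq_of_linearIndependent hind hcard fun j => by
      rw [dotProduct_incVec, hone, add_dotProduct, single_one_dotProduct,
        single_one_dotProduct, hpair]
  have hxv : x ≠ v := (G.ne_of_adj ((adj_iff_of_neighborSet_eq_pair hnb x).2 (Or.inl rfl))).symm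
  exact hcx (by simp [hc, hxv, hxy])

theorem le_of_neighborSet_eq_pair (hcard : Fintype.card ι = Fintype.card V)
    (hvalid : ∀ T : Finset V, IsStable G T → ∑ u ∈ T, c u ≤ 1)
    (hmax : ∀ j, MaxStable G (S j)) (hind : LinearIndependent ℝ (fun j => incVec (S j)))
    (hone : ∀ j, ∑ u ∈ S j, c u = 1) (hcx : c x ≠ 0) (hxy : x ≠ y)
    (hnb : G.neighborSet v = {x, y}) : c v ≤ c x := by
  classical
  obtain ⟨j, hx, hy⟩ :=
    exists_mem_notMem_of_neighborSet_eq_pair hcard hmax hind hone hcx hxy hnb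
  have hv : v ∉ (S j).erase x := fun hv => (hmax j).1 v (Finset.mem_of_mem_erase hv) x hx
    ((adj_iff_of_neighborSet_eq_pair hnb x).2 (Or.inl rfl))
  have hswap := hvalid _ ((hmax j).1.insert_erase_of_neighborSet_eq_pair hnb hy)
  rw [Finset.sum_insert hv, Finset.sum_erase_eq_sub hx, hone] at hswap
  linarith

end Facet

theorem stmt7_general {V : Type*} [Fintype V] (G : SimpleGraph V) (c : V → ℝ)
    (hc : ∀ u, c u ≠ 0)
    (hvalid : ∀ S : Finset V, IsStable G S → ∑ u ∈ S, c u ≤ 1)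
    (S : Fin (Fintype.card V) → Finset V)
    (hmax : ∀ j, MaxStable G (S j))
    (hind : LinearIndependent ℝ (fun j => incVec (S j)))
    (hone : ∀ j, ∑ u ∈ S j, c u = 1)
    (v a b : V) (hab : a ≠ b) (hnb : G.neighborSet v = {a, b}) :
    c v ≤ c a ∧ c v ≤ c b := by
  have hcard : Fintype.card (Fin (Fintype.card V)) = Fintype.card V := Fintype.card_fin _
  exact ⟨le_of_neighborSet_eq_pair hcard hvalid hmax hind hone (hc a) hab hnb,
    le_of_neighborSet_eq_pair hcard hvalid hmax hind hone (hc b) hab.symm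
      (by rw [hnb, Set.pair_comm])⟩

theorem stmt7 {V : Type*} [Fintype V] (G : SimpleGraph V) (c : V → ℝ)
    (hc : ∀ u, c u ≠ 0)
    (hvalid : ∀ S : Finset V, IsStable G S → ∑ u ∈ S, c u ≤ 1)
    (S : Fin (Fintype.card V) → Finset V)
    (hmax : ∀ j, MaxStable G (S j))
    (hind : LinearIndependent ℝ (fun j => incVec (S j)))
    (hone : ∀ j, ∑ u ∈ S j, c u = 1)
    (v a b : V) (hab : a ≠ b) (hnb : G.neighborSet v = {a, b})
    (hnadj : ¬ G.Adj a b) :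
    c v ≤ c a ∧ c v ≤ c b :=
  stmt7_general G c hc hvalid S hmax hind hone v a b hab hnb
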